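/- For any index 𝐤 = (k_1,…,k_r) with r ≥ 1, one has ζ^{(r)}_𝒜(𝐤) = (−1)^{wt(𝐤)} ζ_𝒜(𝐤) in 𝒜. -/

import Mathlib

open scoped BigOperators

set_option synthInstance.maxHeartbeats 400000

namespace FMP

/-- The type of prime numbers. -/
abbrev PP := Nat.Primes

instance (p : PP) : Fact (Nat.Prime (p : ℕ)) := ⟨p.2⟩

/-- The ideal of families vanishing at all but finitely many primes. -/
def cofinIdeal (R : PP → Type) [∀ p, CommRing (R p)] : Ideal (∀ p, R p) where
  carrier := {f | ∀ᶠ p in Filter.cofinite, f p = 0}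
  add_mem' := by
    intro f g hf hg
    show ∀ᶠ p in Filter.cofinite, (f + g) p = 0
    simp only [Set.mem_setOf_eq] at hf hg
    filter_upwards [hf, hg] with p h1 h2
    simp [h1, h2]
  zero_mem' := by
    show ∀ᶠ p in Filter.cofinite, (0 : ∀ p, R p) p = 0
    exact Filter.Eventually.of_forall fun p => rfl
  smul_mem' := by
    intro c f hf
    show ∀ᶠ p in Filter.cofinite, (c • f) p = 0
    simp only [Set.mem_setOf_eq] at hf
    filter_upwards [hf] with p h
    simp [h]

lemma mem_cofinIdeal {R : PP → Type} [∀ p, CommRing (R p)] (f : ∀ p, R p) :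
    f ∈ cofinIdeal R ↔ ∀ᶠ p in Filter.cofinite, f p = 0 := Iff.rfl

/-- The ring 𝒜 = (∏ₚ 𝔽ₚ)/(⊕ₚ 𝔽ₚ). -/
abbrev A : Type := (∀ p : PP, ZMod p) ⧸ cofinIdeal fun p => ZMod p

/-- The ring ℬ = (∏ₚ 𝔽ₚ[T])/(⊕ₚ 𝔽ₚ[T]). -/
abbrev B : Type := (∀ p : PP, Polynomial (ZMod p)) ⧸ cofinIdeal fun p => Polynomial (ZMod p)

noncomputable def Amk : (∀ p : PP, ZMod p) →+* A := Ideal.Quotient.mk _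
noncomputable def Bmk : (∀ p : PP, Polynomial (ZMod p)) →+* B := Ideal.Quotient.mk _

/-- The componentwise action of 𝒜 on ℬ, as a ring homomorphism 𝒜 →+* ℬ. -/
noncomputable def AtoB : A →+* B :=
  Ideal.Quotient.lift _
    (Bmk.comp (Pi.ringHom fun p => Polynomial.C.comp (Pi.evalRingHom (fun q : PP => ZMod (q : ℕ)) p)))
    (fun f hf => by
      rw [RingHom.comp_apply]
      rw [show Bmk = Ideal.Quotient.mk (cofinIdeal fun p => Polynomial (ZMod p)) from rfl]
      rw [Ideal.Quotient.eq_zero_iff_mem, mem_cofinIdeal]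
      rw [mem_cofinIdeal] at hf
      filter_upwards [hf] with p h
      change Polynomial.C (f p) = 0
      rw [h, map_zero])

/-- Partial sums: `psum l i = l 0 + ... + l i`. -/
def psum {r : ℕ} (l : Fin r → ℕ) (i : Fin r) : ℕ := ∑ j ∈ Finset.Iic i, l j

/-- The finset of tuples `(l 0, ..., l (r-1))` with `0 < l i < p`. -/
def pf (r p : ℕ) : Finset (Fin r → ℕ) := Fintype.piFinset fun _ => Finset.Ioo 0 p

/-- The denominator `L_1^{k_1} ⋯ L_r^{k_r}` of a term, as an element of 𝔽ₚ.
(Its inverse is `0` whenever some partial sum is divisible by `p`, so taking inverses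
of these denominators automatically implements the restricted sums `Σ'`.) -/
def den (p : PP) (k : List ℕ) (l : Fin k.length → ℕ) : ZMod (p : ℕ) :=
  ∏ i, ((psum l i : ℕ) : ZMod (p : ℕ)) ^ k.get i

/-- The weight of an index. -/
def wt (k : List ℕ) : ℕ := k.sum

/-- The finite multiple zeta value ζ_𝒜(k). -/
noncomputable def zetaA (k : List ℕ) : A :=
  Amk fun p => ∑ l ∈ (pf k.length (p : ℕ)).filter (fun l => ∑ i, l i < (p : ℕ)), (den p k l)⁻¹

/-- The variant ζ^{(i)}_𝒜(k) of finite multiple zeta values. -/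
noncomputable def zetaAi (i : ℕ) (k : List ℕ) : A :=
  Amk fun p => ∑ l ∈ (pf k.length (p : ℕ)).filter
      (fun l => (i - 1) * (p : ℕ) < ∑ j, l j ∧ ∑ j, l j < i * (p : ℕ)), (den p k l)⁻¹

/-- The finite multiple polylogarithm li_k(T) ∈ ℬ. -/
noncomputable def liT (k : List ℕ) : B :=
  Bmk fun p => ∑ l ∈ pf k.length (p : ℕ),
    Polynomial.C ((den p k l)⁻¹) * Polynomial.X ^ (∑ i, l i)

/-- The element T^p of ℬ. -/
noncomputable def Tp : B := Bmk fun p => Polynomial.X ^ (p : ℕ)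

/-- The finite multiple polylogarithm li(λ, μ, ν; T) of type (λ, μ, ν). -/
noncomputable def liType (lam mu nu : List ℕ) : B :=
  Bmk fun p =>
    ∑ l ∈ pf lam.length (p : ℕ), ∑ m ∈ pf mu.length (p : ℕ), ∑ n ∈ pf nu.length (p : ℕ),
      Polynomial.C ((den p lam l * den p mu m *
          ∏ z, ((((∑ i, l i) + (∑ j, m j) + psum n z : ℕ)) : ZMod (p : ℕ)) ^ nu.get z)⁻¹) *
        Polynomial.X ^ ((∑ i, l i) + (∑ j, m j) + (∑ z, n z))


/-! The substitution `l_j ↦ p - l_j` is an involution of `{1, …, p - 1}^r` exchanging the tuples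
with `L_r ∈ ((r - 1)p, rp)` and those with `L_r < p`. It negates every partial sum `L_j` modulo
`p`, so it multiplies each denominator by `(-1)^{wt k}`; hence the identity already holds
prime by prime. -/

def reflect (p : ℕ) {r : ℕ} (l : Fin r → ℕ) : Fin r → ℕ := fun j => p - l j

section Reflect

variable {r p : ℕ} {l : Fin r → ℕ}

lemma mem_pf_iff : l ∈ pf r p ↔ ∀ i, 0 < l i ∧ l i < p := by
  simp [pf, Fintype.mem_piFinset]

lemma le_of_mem_pf (hl : l ∈ pf r p) (i : Fin r) : l i ≤ p :=
  ((mem_pf_iff.mp hl) i).2.le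

lemma reflect_reflect (h : ∀ i, l i ≤ p) : reflect p (reflect p l) = l :=
  funext fun j => Nat.sub_sub_self (h j)

lemma reflect_mem_pf (hl : l ∈ pf r p) : reflect p l ∈ pf r p := by
  rw [mem_pf_iff] at hl ⊢
  intro i
  have := hl i
  simp only [reflect]
  omega

lemma sum_reflect_add_sum (h : ∀ i, l i ≤ p) : ∑ j, reflect p l j + ∑ j, l j = r * p := by
  simp [reflect, ← Finset.sum_add_distrib, Nat.sub_add_cancel (h _)]

lemma sum_pos_of_mem_pf (hr : 0 < r) (hl : l ∈ pf r p) : 0 < ∑ j, l j :=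
  haveI : Nonempty (Fin r) := ⟨⟨0, hr⟩⟩
  Finset.sum_pos (fun i _ => ((mem_pf_iff.mp hl) i).1) Finset.univ_nonempty

lemma sum_reflect_bounds_iff (hr : 0 < r) (hl : l ∈ pf r p) :
    ((r - 1) * p < ∑ j, reflect p l j ∧ ∑ j, reflect p l j < r * p) ↔ ∑ j, l j < p := by
  have hsum := sum_reflect_add_sum (le_of_mem_pf hl)
  have hpos := sum_pos_of_mem_pf hr hl
  have hmul : (r - 1) * p + p = r * p := by
    rw [Nat.sub_mul, one_mul, Nat.sub_add_cancel (Nat.le_mul_of_pos_left _ hr)]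
  omega

lemma natCast_psum_reflect (h : ∀ i, l i ≤ p) (i : Fin r) :
    ((psum (reflect p l) i : ℕ) : ZMod p) = -(psum l i : ZMod p) := by
  simp [psum, reflect, Nat.cast_sub (h _)]

end Reflect

lemma den_reflect (p : PP) (k : List ℕ) {l : Fin k.length → ℕ} (h : ∀ i, l i ≤ (p : ℕ)) :
    den p k (reflect p l) = (-1) ^ wt k * den p k l := by
  rw [den, den, Finset.prod_congr rfl fun i _ => by rw [natCast_psum_reflect h i, neg_pow],
    Finset.prod_mul_distrib, Finset.prod_pow_eq_pow_sum]
  simp [wt]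

lemma zetaAi_depth_component_eq (p : PP) (k : List ℕ) (hr : 0 < k.length) :
    ∑ l ∈ (pf k.length p).filter
        (fun l => (k.length - 1) * (p : ℕ) < ∑ j, l j ∧ ∑ j, l j < k.length * (p : ℕ)),
        (den p k l)⁻¹ =
      (-1) ^ wt k * ∑ l ∈ (pf k.length p).filter (fun l => ∑ j, l j < (p : ℕ)), (den p k l)⁻¹ := by
  rw [Finset.mul_sum]
  refine Finset.sum_nbij' (reflect p) (reflect p) ?_ ?_ ?_ ?_ ?_ <;>
    simp only [Finset.mem_filter]
  · rintro l ⟨hl, htop⟩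
    refine ⟨reflect_mem_pf hl, ?_⟩
    rwa [← sum_reflect_bounds_iff hr (reflect_mem_pf hl), reflect_reflect (le_of_mem_pf hl)]
  · rintro l ⟨hl, hbot⟩
    exact ⟨reflect_mem_pf hl, (sum_reflect_bounds_iff hr hl).mpr hbot⟩
  · rintro l ⟨hl, -⟩
    exact reflect_reflect (le_of_mem_pf hl)
  · rintro l ⟨hl, -⟩
    exact reflect_reflect (le_of_mem_pf hl)
  · rintro l ⟨hl, -⟩
    rw [den_reflect p k (le_of_mem_pf hl), mul_inv, mul_inv_cancel_left₀ (by simp)]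

theorem zetaAi_depth_eq_general (k : List ℕ) (hr : 0 < k.length) :
    zetaAi k.length k = (-1 : A) ^ wt k * zetaA k := by
  have hsign : (-1 : A) ^ wt k = Amk ((-1) ^ wt k) := by simp
  rw [zetaAi, zetaA, hsign, ← map_mul]
  congr 1
  funext p
  exact zetaAi_depth_component_eq p k hr

/-- ζ^{(r)}_𝒜(𝐤) = (−1)^{wt(𝐤)} ζ_𝒜(𝐤). -/
theorem zetaAi_depth_eq (k : List ℕ) (hk : ∀ i ∈ k, 0 < i) (hr : 0 < k.length) :
    zetaAi k.length k = (-1 : A) ^ wt k * zetaA k :=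
  zetaAi_depth_eq_general k hr

end FMP
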